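/- Let G = (G, δ, ε) be a comonad on a category A and F : B → A a left G-comodule functor with right adjoint R, lifted functor F̄ : B → A^G and comonad morphism t : FR → G. Suppose that for every object b ∈ B the component t_{F(b)} : FR(F(b)) → G(F(b)) is an isomorphism. Then F̄ restricts to a functor F̄' : Inj(F, B) → Inj(U^G, A^G); that is, F̄ sends F-injective objects of B to U^G-injective G-comodules. -/

import Mathlib

/-!
Since `F(η_b)` is split by the counit, an `F`-injective `b` is a retract of `RF(b)`, so `F̄(b)`
is a retract of `F̄(RF(b))`. The component `t_{F(b)}` is the transpose of `σ_{F(b)}` under the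
cofree adjunction, hence a comodule map `F̄(RF(b)) ⟶ (G(F(b)), δ)`, and an isomorphism by
hypothesis. Objects in the image of a right adjoint are injective relative to the left adjoint,
so the cofree comodule is `U^G`-injective, and relative injectivity passes to retracts.
-/

open CategoryTheory CategoryTheory.Limits

namespace Paper

variable {A : Type*} [Category A] {B : Type*} [Category B]

/-- A left `G`-comodule structure `β : F ⟶ GF` on a functor `F : B ⥤ A`. -/
structure ComoduleStruct (G : Comonad A) (F : B ⥤ A) where
  β : F ⟶ F ⋙ (G : A ⥤ A)
  counit : ∀ b : B, β.app b ≫ G.ε.app (F.obj b) = 𝟙 (F.obj b)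
  coassoc : ∀ b : B, β.app b ≫ G.δ.app (F.obj b) = β.app b ≫ (G : A ⥤ A).map (β.app b)

/-- The lifting `F̄ : B ⥤ A^G` of a `G`-comodule functor `(F, β)`, satisfying `U^G ∘ F̄ = F`. -/
@[simps]
def ComoduleStruct.lift {G : Comonad A} {F : B ⥤ A} (c : ComoduleStruct G F) :
    B ⥤ G.Coalgebra where
  obj b :=
    { A := F.obj b
      a := c.β.app b
      counit := c.counit b
      coassoc := c.coassoc b }
  map f :=
    { f := F.map f
      h := (c.β.naturality f).symm }

/-- The comonad morphism `t = Gσ ∘ βR : FR ⟶ G` associated with a `G`-comodule functor `F`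
with right adjoint `R` (counit `σ`). -/
def ComoduleStruct.galoisHom {G : Comonad A} {F : B ⥤ A} (c : ComoduleStruct G F)
    (R : A ⥤ B) (adj : F ⊣ R) : R ⋙ F ⟶ (G : A ⥤ A) :=
  Functor.whiskerLeft R c.β ≫ Functor.whiskerRight adj.counit (G : A ⥤ A) ≫ (Functor.leftUnitor _).hom

/-- An object `b` is `F`-injective if any morphism out of `b₁` which becomes a split
monomorphism under `F` allows extension of morphisms `b₁ ⟶ b`. -/
def FInjective (F : B ⥤ A) (b : B) : Prop :=
  ∀ ⦃b₁ b₂ : B⦄ (f : b₁ ⟶ b₂) (g : b₁ ⟶ b), IsSplitMono (F.map f) → ∃ h : b₂ ⟶ b, f ≫ h = g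

lemma FInjective.of_retract {F : B ⥤ A} {b b' : B} (e : Retract b b') (hb' : FInjective F b') :
    FInjective F b := by
  intro b₁ b₂ f g hf
  obtain ⟨h, hh⟩ := hb' f (g ≫ e.i) hf
  exact ⟨h ≫ e.r, by rw [reassoc_of% hh, e.retract, Category.comp_id]⟩

theorem _root_.CategoryTheory.Adjunction.fInjective_obj {L : B ⥤ A} {R : A ⥤ B} (adj : L ⊣ R)
    (a : A) : FInjective L (R.obj a) := by
  intro b₁ b₂ f g hf
  refine ⟨adj.homEquiv _ _ (retraction (L.map f) ≫ (adj.homEquiv _ _).symm g), ?_⟩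
  rw [← adj.homEquiv_naturality_left, IsSplitMono.id_assoc, Equiv.apply_symm_apply]

lemma FInjective.exists_retraction_unit {F : B ⥤ A} {R : A ⥤ B} (adj : F ⊣ R) {b : B}
    (hb : FInjective F b) : ∃ r : R.obj (F.obj b) ⟶ b, adj.unit.app b ≫ r = 𝟙 b :=
  hb (adj.unit.app b) (𝟙 b)
    (IsSplitMono.mk' ⟨adj.counit.app (F.obj b), adj.left_triangle_components b⟩)

namespace ComoduleStruct

variable {G : Comonad A} {F : B ⥤ A} {R : A ⥤ B}

def galoisCoalgebraHom (c : ComoduleStruct G F) (adj : F ⊣ R) (a : A) :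
    c.lift.obj (R.obj a) ⟶ G.cofree.obj a :=
  G.adj.homEquiv _ _ (show G.forget.obj (c.lift.obj (R.obj a)) ⟶ a from adj.counit.app a)

lemma galoisCoalgebraHom_f (c : ComoduleStruct G F) (adj : F ⊣ R) (a : A) :
    (c.galoisCoalgebraHom adj a).f = (c.galoisHom R adj).app a := by
  rw [galoisCoalgebraHom, Adjunction.homEquiv_unit, Comonad.Coalgebra.comp_f,
    Comonad.cofree_map_f]
  simp only [galoisHom, NatTrans.comp_app, Functor.whiskerLeft_app, Functor.whiskerRight_app,
    Functor.leftUnitor_hom_app, Comonad.adj_unit]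
  exact (Category.comp_id (G.map (adj.counit.app a))).symm ▸ rfl

end ComoduleStruct

/-- **Proposition 1.7.**  Let `G` be a comonad on `A` and `F : B ⥤ A` a left `G`-comodule
functor with right adjoint `R` and comonad morphism `t : FR ⟶ G`.  If `t_{F(b)}` is an
isomorphism for every `b : B`, then the lifted functor `F̄` sends `F`-injective objects of
`B` to `U^G`-injective `G`-comodules. -/
theorem statement3 (G : Comonad A) (F : B ⥤ A) (R : A ⥤ B)
    (adj : F ⊣ R) (c : ComoduleStruct G F)
    (ht : ∀ b : B, IsIso ((c.galoisHom R adj).app (F.obj b))) :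
    ∀ b : B, FInjective F b → FInjective G.forget (c.lift.obj b) := by
  intro b hb
  obtain ⟨r, hr⟩ := hb.exists_retraction_unit adj
  let t := c.galoisCoalgebraHom adj (F.obj b)
  have : IsIso (G.forget.map t) := by
    rw [Comonad.forget_map, c.galoisCoalgebraHom_f]
    exact ht b
  have : IsIso t := isIso_of_reflects_iso t G.forget
  exact (G.adj.fInjective_obj (F.obj b)).of_retract
    (((Retract.mk _ r hr).map c.lift).trans (Retract.ofIso (asIso t)))

end Paper
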